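/- arXiv:2005.09318 — 6 statements merged into one kernel-verified Lean document; each statement's English description precedes it below -/
import Mathlib

section
/- For $0 < T \le 2$, the supremum of $\|f'\|_\infty$ over all $f \in \mathcal{L}_2(T)$ equals $2/T + T/2$, and it is attained by the function $f(t) = -t^2/2 + (2/T + T/2)t - 1$. -/
/-!
Integrating the Lipschitz bound `|f' t - f' x| ≤ |t - x|` over `[0, T]` gives
`|T f'(x) - (f T - f 0)| ≤ x² / 2 + (T - x)² / 2 ≤ T² / 2`, while `|f T - f 0| ≤ 2`; hence
`T |f' x| ≤ 2 + T² / 2`. The parabola with `f'' = -1`, `f 0 = -1`, `f T = 1` attains this at `x = 0`,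
and it stays in `[-1, 1]` because it is increasing on `[0, T]` as long as `T ≤ 2`.
-/

open Set

/-- Membership in Landau's class `𝓛₂(T)`. -/
def InL2 (T : ℝ) (f f' : ℝ → ℝ) : Prop :=
  (∀ t ∈ Icc 0 T, HasDerivWithinAt f (f' t) (Icc 0 T) t) ∧
  (∀ t ∈ Icc 0 T, |f t| ≤ 1) ∧
  LipschitzOnWith 1 f' (Icc 0 T)

open intervalIntegral NNReal

theorem integral_abs_sub_eq {a b x : ℝ} (hax : a ≤ x) (hxb : x ≤ b) :
    ∫ t in a..b, |t - x| = ((x - a) ^ 2 + (b - x) ^ 2) / 2 := by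
  have hint : ∀ u v : ℝ, IntervalIntegrable (fun t => |t - x|) MeasureTheory.volume u v :=
    fun u v => (continuous_abs.comp (continuous_sub_right x)).intervalIntegrable u v
  have hleft : ∫ t in a..x, |t - x| = ∫ t in a..x, (x - t) :=
    integral_congr fun t ht => by
      rw [uIcc_of_le hax] at ht
      simp only [abs_of_nonpos (sub_nonpos.mpr ht.2), neg_sub]
  have hright : ∫ t in x..b, |t - x| = ∫ t in x..b, (t - x) :=
    integral_congr fun t ht => by
      rw [uIcc_of_le hxb] at ht
      simp only [abs_of_nonneg (sub_nonneg.mpr ht.1)]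
  rw [← integral_add_adjacent_intervals (hint a x) (hint x b), hleft, hright,
    integral_sub intervalIntegrable_const intervalIntegrable_id,
    integral_sub intervalIntegrable_id intervalIntegrable_const]
  simp only [integral_id, integral_const, smul_eq_mul]
  ring

theorem abs_integral_sub_mul_le_of_lipschitzOnWith {g : ℝ → ℝ} {K : ℝ≥0} {a b x : ℝ}
    (hg : LipschitzOnWith K g (Icc a b)) (hax : a ≤ x) (hxb : x ≤ b) :
    |(∫ t in a..b, g t) - (b - a) * g x| ≤ K * (((x - a) ^ 2 + (b - x) ^ 2) / 2) := by
  have hab : a ≤ b := hax.trans hxb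
  have hg_int : IntervalIntegrable g MeasureTheory.volume a b :=
    hg.continuousOn.intervalIntegrable_of_Icc hab
  have hdiff : (∫ t in a..b, g t) - (b - a) * g x = ∫ t in a..b, (g t - g x) := by
    rw [integral_sub hg_int intervalIntegrable_const, integral_const, smul_eq_mul]
  have hpointwise : ∀ t ∈ Ioc a b, ‖g t - g x‖ ≤ K * |t - x| := fun t ht => by
    simpa only [Real.dist_eq, Real.norm_eq_abs] using
      hg.dist_le_mul t (Ioc_subset_Icc_self ht) x ⟨hax, hxb⟩
  calc |(∫ t in a..b, g t) - (b - a) * g x|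
      ≤ ∫ t in a..b, K * |t - x| := by
        rw [hdiff, ← Real.norm_eq_abs]
        exact norm_integral_le_of_norm_le hab (MeasureTheory.ae_of_all _ hpointwise)
          ((continuous_const.mul (continuous_abs.comp (continuous_sub_right x))).intervalIntegrable a b)
    _ = K * (((x - a) ^ 2 + (b - x) ^ 2) / 2) := by
        rw [integral_const_mul, integral_abs_sub_eq hax hxb]

theorem InL2.integral_deriv {T : ℝ} {f f' : ℝ → ℝ} (hf : InL2 T f f') (hT : 0 ≤ T) :
    ∫ t in (0 : ℝ)..T, f' t = f T - f 0 := by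
  obtain ⟨hderiv, -, hlip⟩ := hf
  refine integral_eq_sub_of_hasDeriv_right_of_le hT
    (fun t ht => (hderiv t ht).continuousWithinAt) (fun t ht => ?_)
    (hlip.continuousOn.intervalIntegrable_of_Icc hT)
  exact ((hderiv t (Ioo_subset_Icc_self ht)).hasDerivAt
    (Icc_mem_nhds ht.1 ht.2)).hasDerivWithinAt

theorem InL2.abs_deriv_le {T : ℝ} {f f' : ℝ → ℝ} (hf : InL2 T f f') (hT : 0 < T)
    {x : ℝ} (hx : x ∈ Icc 0 T) : |f' x| ≤ 2 / T + T / 2 := by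
  have hmean := abs_integral_sub_mul_le_of_lipschitzOnWith hf.2.2 hx.1 hx.2
  rw [hf.integral_deriv hT.le, NNReal.coe_one, one_mul, sub_zero] at hmean
  have hf_ends : |f T - f 0| ≤ 2 := (abs_sub _ _).trans <| by
    linarith [hf.2.1 T ⟨hT.le, le_rfl⟩, hf.2.1 0 ⟨le_rfl, hT.le⟩]
  have hquad : ((x - 0) ^ 2 + (T - x) ^ 2) / 2 ≤ T ^ 2 / 2 := by
    nlinarith [mul_nonneg hx.1 (sub_nonneg.mpr hx.2)]
  have hscaled : T * |f' x| ≤ 2 + T ^ 2 / 2 :=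
    calc T * |f' x| = |(f T - f 0) - (f T - f 0 - T * f' x)| := by
          rw [sub_sub_cancel, abs_mul, abs_of_pos hT]
      _ ≤ |f T - f 0| + |f T - f 0 - T * f' x| := abs_sub _ _
      _ ≤ 2 + T ^ 2 / 2 := by linarith
  rw [show 2 / T + T / 2 = (2 + T ^ 2 / 2) / T by field_simp, le_div_iff₀ hT]
  linarith

theorem inL2_extremal {T : ℝ} (hT0 : 0 < T) (hT2 : T ≤ 2) :
    InL2 T (fun t => -t ^ 2 / 2 + (2 / T + T / 2) * t - 1)
      (fun t => -t + (2 / T + T / 2)) := by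
  set C := 2 / T + T / 2 with hC
  have hCT : C * T = 2 + T ^ 2 / 2 := by rw [hC]; field_simp
  refine ⟨fun t _ => ?_, fun t ht => abs_le.mpr ⟨?_, ?_⟩, ?_⟩
  · have h : HasDerivAt (fun s : ℝ => -s ^ 2 / 2 + C * s - 1) (-t + C) t :=
      ((((hasDerivAt_pow 2 t).neg.div_const 2).add
        ((hasDerivAt_id t).const_mul C)).sub_const 1).congr_deriv (by norm_num; ring)
    exact h.hasDerivWithinAt
  -- `f + 1 = t (C - t/2)` and `T (1 - f) = (T - t)(2 - T t / 2)`, both nonnegative as `T ≤ 2`.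
  · nlinarith [mul_nonneg ht.1 (show 0 ≤ C - t / 2 by nlinarith [ht.2])]
  · nlinarith [mul_nonneg (sub_nonneg.mpr ht.2) (show 0 ≤ 2 - T * t / 2 by nlinarith [ht.1, ht.2]),
      mul_le_mul_of_nonneg_right hCT.le ht.1]
  · refine (LipschitzWith.of_dist_le_mul fun a b => ?_).lipschitzOnWith
    rw [Real.dist_eq, Real.dist_eq, NNReal.coe_one, one_mul,
      show -a + C - (-b + C) = -(a - b) by ring, abs_neg]

/-- For `0 < T ≤ 2`, `sup_{f ∈ 𝓛₂(T)} ‖f'‖_∞ = 2/T + T/2`, attained by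
`f(t) = -t²/2 + (2/T + T/2)t - 1`. -/
theorem landau_sup_small_T (T : ℝ) (hT0 : 0 < T) (hT2 : T ≤ 2) :
    IsGreatest {y : ℝ | ∃ f f' : ℝ → ℝ, InL2 T f f' ∧
        ∃ x ∈ Icc 0 T, y = |f' x|} (2 / T + T / 2) ∧
    InL2 T (fun t => -t ^ 2 / 2 + (2 / T + T / 2) * t - 1)
        (fun t => -t + (2 / T + T / 2)) ∧
    |(fun t : ℝ => -t + (2 / T + T / 2)) 0| = 2 / T + T / 2 := by
  have hextremal := inL2_extremal hT0 hT2
  have hvalue : |(fun t : ℝ => -t + (2 / T + T / 2)) 0| = 2 / T + T / 2 := by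
    simp only [neg_zero, zero_add]
    exact abs_of_pos (by positivity)
  refine ⟨⟨⟨_, _, hextremal, 0, ⟨le_rfl, hT0.le⟩, hvalue.symm⟩, ?_⟩, hextremal, hvalue⟩
  rintro y ⟨f, f', hf, x, hx, rfl⟩
  exact hf.abs_deriv_le hT0 hx
end

section
/- Let $0 \le t_0 \le T/2$ with $t_0 > \sqrt 2$. Then $\sup_{f \in \mathcal{L}_2(T)} f'(t_0) = \sqrt 2$. -/
/-!
Upper bound: if `f'` is `1`-Lipschitz, then on `[t₀, t₀ + h]` and on `[t₀ - h, t₀]` the increment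
of `f` is at least `f'(t₀) h - h²/2`; adding the two and using `|f| ≤ 1` gives
`f'(t₀) ≤ 1/h + h/2`, which is minimised at `h = √2`. Equality: the primitive of the tent of
height and half-width `√2` centred at `t₀`, started at `-1`, rises by exactly `2`.
-/

open Set Real

open intervalIntegral
open scoped NNReal

section Taylor

variable {f f' g g' : ℝ → ℝ} {a b : ℝ}

lemma sub_le_sub_of_hasDerivWithinAt_le
    (hf : ∀ t ∈ Icc a b, HasDerivWithinAt f (f' t) (Icc a b) t)
    (hg : ∀ t ∈ Icc a b, HasDerivWithinAt g (g' t) (Icc a b) t)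
    (hle : ∀ t ∈ Ioo a b, g' t ≤ f' t) (hab : a ≤ b) :
    g b - g a ≤ f b - f a := by
  have hmono : MonotoneOn (fun t => f t - g t) (Icc a b) := by
    refine monotoneOn_of_hasDerivWithinAt_nonneg (f' := fun t => f' t - g' t) (convex_Icc a b)
      ((HasDerivWithinAt.continuousOn hf).sub (HasDerivWithinAt.continuousOn hg)) ?_ ?_
    · intro t ht
      rw [interior_Icc] at ht ⊢
      exact ((hf t (Ioo_subset_Icc_self ht)).sub (hg t (Ioo_subset_Icc_self ht))).mono
        Ioo_subset_Icc_self
    · intro t ht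
      rw [interior_Icc] at ht
      exact sub_nonneg.mpr (hle t ht)
  have := hmono (left_mem_Icc.mpr hab) (right_mem_Icc.mpr hab) hab
  linarith

variable {K : ℝ≥0}

lemma LipschitzOnWith.mul_sub_sub_le_of_hasDerivWithinAt_left
    (hf : ∀ t ∈ Icc a b, HasDerivWithinAt f (f' t) (Icc a b) t)
    (hf' : LipschitzOnWith K f' (Icc a b)) (hab : a ≤ b) :
    f' a * (b - a) - K / 2 * (b - a) ^ 2 ≤ f b - f a := by
  have hg : ∀ t ∈ Icc a b, HasDerivWithinAt (fun t => f' a * t - K / 2 * (t - a) ^ 2)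
      (f' a - K * (t - a)) (Icc a b) t := fun t _ => by
    have := ((hasDerivAt_id' t).const_mul (f' a)).sub
      ((((hasDerivAt_id' t).sub_const a).pow 2).const_mul (K / 2 : ℝ))
    exact (this.congr_deriv (by ring)).hasDerivWithinAt
  have := sub_le_sub_of_hasDerivWithinAt_le hf hg (fun t ht => ?_) hab
  · linarith
  · have hdist := hf'.dist_le_mul a (left_mem_Icc.mpr hab) t (Ioo_subset_Icc_self ht)
    rw [Real.dist_eq, Real.dist_eq, abs_of_neg (sub_neg.mpr ht.1)] at hdist
    linarith [le_abs_self (f' a - f' t)]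

lemma LipschitzOnWith.mul_sub_sub_le_of_hasDerivWithinAt_right
    (hf : ∀ t ∈ Icc a b, HasDerivWithinAt f (f' t) (Icc a b) t)
    (hf' : LipschitzOnWith K f' (Icc a b)) (hab : a ≤ b) :
    f' b * (b - a) - K / 2 * (b - a) ^ 2 ≤ f b - f a := by
  have hg : ∀ t ∈ Icc a b, HasDerivWithinAt (fun t => f' b * t + K / 2 * (b - t) ^ 2)
      (f' b - K * (b - t)) (Icc a b) t := fun t _ => by
    have := ((hasDerivAt_id' t).const_mul (f' b)).add
      ((((hasDerivAt_id' t).const_sub b).pow 2).const_mul (K / 2 : ℝ))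
    exact (this.congr_deriv (by ring)).hasDerivWithinAt
  have := sub_le_sub_of_hasDerivWithinAt_le hf hg (fun t ht => ?_) hab
  · linarith
  · have hdist := hf'.dist_le_mul b (right_mem_Icc.mpr hab) t (Ioo_subset_Icc_self ht)
    rw [Real.dist_eq, Real.dist_eq, abs_of_pos (sub_pos.mpr ht.2)] at hdist
    linarith [le_abs_self (f' b - f' t)]

end Taylor

lemma InL2.le_inv_add_half {T t h : ℝ} {f f' : ℝ → ℝ} (hf : InL2 T f f') (hh : 0 < h)
    (ht : h ≤ t) (htT : t + h ≤ T) : f' t ≤ h⁻¹ + h / 2 := by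
  obtain ⟨hderiv, hbound, hlip⟩ := hf
  have hrestrict {a b : ℝ} (ha : 0 ≤ a) (hb : b ≤ T) :
      (∀ x ∈ Icc a b, HasDerivWithinAt f (f' x) (Icc a b) x) ∧ LipschitzOnWith 1 f' (Icc a b) :=
    have hsub := Icc_subset_Icc ha hb
    ⟨fun x hx => (hderiv x (hsub hx)).mono hsub, hlip.mono hsub⟩
  obtain ⟨hderiv_right, hlip_right⟩ := hrestrict (a := t) (by linarith) htT
  obtain ⟨hderiv_left, hlip_left⟩ := hrestrict (a := t - h) (b := t) (by linarith) (by linarith)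
  have hforward := hlip_right.mul_sub_sub_le_of_hasDerivWithinAt_left hderiv_right (by linarith)
  have hbackward := hlip_left.mul_sub_sub_le_of_hasDerivWithinAt_right hderiv_left (by linarith)
  have hupper := (abs_le.mp (hbound (t + h) ⟨by linarith, htT⟩)).2
  have hlower := (abs_le.mp (hbound (t - h) ⟨by linarith, by linarith⟩)).1
  push_cast at hforward hbackward
  calc f' t = f' t * h / h := by field_simp
    _ ≤ (1 + h ^ 2 / 2) / h := by gcongr; linarith
    _ = h⁻¹ + h / 2 := by field_simp

def tent (c r t : ℝ) : ℝ := max 0 (r - |t - c|)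

lemma tent_nonneg (c r : ℝ) : 0 ≤ tent c r := fun _ => le_max_left _ _

lemma tent_self (c : ℝ) {r : ℝ} (hr : 0 ≤ r) : tent c r c = r := by
  simp [tent, hr]

lemma lipschitzWith_tent (c r : ℝ) : LipschitzWith 1 (tent c r) :=
  LipschitzWith.of_dist_le_mul fun s t => by
    simp only [tent, Real.dist_eq, NNReal.coe_one, one_mul]
    rw [max_comm 0, max_comm 0]
    calc _ ≤ |(r - |s - c|) - (r - |t - c|)| := abs_max_sub_max_le_abs _ _ _
      _ = |(|t - c|) - (|s - c|)| := by ring_nf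
      _ ≤ |t - c - (s - c)| := abs_abs_sub_abs_le_abs_sub _ _
      _ = |s - t| := by rw [abs_sub_comm]; ring_nf

lemma support_tent_subset (c r : ℝ) : Function.support (tent c r) ⊆ Ioo (c - r) (c + r) := by
  refine Function.support_subset_iff'.mpr fun t ht => max_eq_left ?_
  rw [mem_Ioo, not_and_or, not_lt, not_lt] at ht
  rcases ht with h | h
  · linarith [neg_abs_le (t - c)]
  · linarith [le_abs_self (t - c)]

lemma integral_tent {a b c r : ℝ} (hr : 0 ≤ r) (ha : a ≤ c - r) (hb : c + r ≤ b) :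
    ∫ t in a..b, tent c r t = r ^ 2 := by
  have hsupp := (support_tent_subset c r).trans Ioo_subset_Ioc_self
  have hint := (lipschitzWith_tent c r).continuous.intervalIntegrable (μ := MeasureTheory.volume)
  have hleft : EqOn (tent c r) (fun t => t - (c - r)) (uIcc (c - r) c) := by
    intro t ht
    rw [uIcc_of_le (by linarith)] at ht
    simp only [tent]
    rw [abs_of_nonpos (by linarith [ht.2]), max_eq_right (by linarith [ht.1])]
    ring
  have hright : EqOn (tent c r) (fun t => r - (t - c)) (uIcc c (c + r)) := by
    intro t ht
    rw [uIcc_of_le (by linarith)] at ht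
    simp only [tent]
    rw [abs_of_nonneg (by linarith [ht.1]), max_eq_right (by linarith [ht.2])]
  rw [integral_eq_integral_of_support_subset (hsupp.trans (Ioc_subset_Ioc ha hb)),
    ← integral_eq_integral_of_support_subset hsupp,
    ← integral_add_adjacent_intervals (hint _ c) (hint c _),
    integral_congr hleft, integral_congr hright]
  simp only [intervalIntegrable_id, intervalIntegrable_const, integral_sub, integral_id,
    integral_const, sub_sub_cancel, smul_eq_mul, IntervalIntegrable.sub, add_sub_cancel_left]
  ring

lemma inL2_neg_one_add_integral_tent {T c : ℝ} (hc : √2 ≤ c) (hcT : c + √2 ≤ T) :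
    InL2 T (fun t => -1 + ∫ u in (0 : ℝ)..t, tent c √2 u) (tent c √2) := by
  set F := fun t => -1 + ∫ u in (0 : ℝ)..t, tent c √2 u
  have hF (t : ℝ) : HasDerivAt F (tent c √2 t) t :=
    (((lipschitzWith_tent c _).continuous.integral_hasStrictDerivAt 0 t).hasDerivAt).const_add _
  have hmono : Monotone F := monotone_of_hasDerivAt_nonneg hF (tent_nonneg c _)
  refine ⟨fun t _ => (hF t).hasDerivWithinAt, fun t ht => abs_le.mpr ⟨?_, ?_⟩,
    (lipschitzWith_tent c _).lipschitzOnWith⟩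
  · simpa [F] using hmono ht.1
  · calc F t ≤ F T := hmono ht.2
      _ = 1 := by
        simp only [F]
        rw [integral_tent (sqrt_nonneg 2) (by linarith) hcT, sq_sqrt zero_le_two]
        norm_num

theorem landau_pointwise_sup_interior_general (T t₀ : ℝ)
    (ht₀T : t₀ ≤ T / 2) (ht₀2 : Real.sqrt 2 < t₀) :
    IsGreatest {y : ℝ | ∃ f f' : ℝ → ℝ, InL2 T f f' ∧ y = f' t₀}
      (Real.sqrt 2) := by
  have hs : 0 < √2 := by positivity
  refine ⟨⟨_, _, inL2_neg_one_add_integral_tent ht₀2.le (by linarith),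
    (tent_self t₀ hs.le).symm⟩, ?_⟩
  rintro _ ⟨f, f', hf, rfl⟩
  calc f' t₀ ≤ (√2)⁻¹ + √2 / 2 := hf.le_inv_add_half hs ht₀2.le (by linarith)
    _ = √2 := by field_simp; norm_num

/-- Pointwise Landau problem, interior case: if `0 ≤ t₀ ≤ T/2` with
`t₀ > √2`, then `sup_{f ∈ 𝓛₂(T)} f'(t₀) = √2` (and it is attained). -/
theorem landau_pointwise_sup_interior (T t₀ : ℝ) (ht₀0 : 0 ≤ t₀)
    (ht₀T : t₀ ≤ T / 2) (ht₀2 : Real.sqrt 2 < t₀) :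
    IsGreatest {y : ℝ | ∃ f f' : ℝ → ℝ, InL2 T f f' ∧ y = f' t₀}
      (Real.sqrt 2) :=
  landau_pointwise_sup_interior_general T t₀ ht₀T ht₀2
end

section
/- For every differentiable $f : \mathbb{R} \to \mathbb{R}$ with $|f| \le 1$ and $f'$ Lipschitz of constant $1$, and every $t \in \mathbb{R}$, one has $|f'(t)| \le \sqrt{2(1 - |f(t)|)}$. In particular $\sup \|f'\|_\infty = \sqrt 2$ over this class, attained by the comparison function $q$. -/
/-!
Taylor's formula with the sharp remainder `|f (t + u) - f t - u f' t| ≤ u² / 2`, taken at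
`u = ± f' t`, gives `f' t ^ 2 / 2 ≤ 1 ∓ f t`, because `f` cannot leave `[-1, 1]`.
The bound `√2` is attained by the primitive `q` of a triangle wave of slopes `±1` and amplitude
`√2`: `q'` is `1`-Lipschitz, `|q| ≤ 1` is read off one period, and `|q' √2| = √2`. The
hypotheses on an arbitrary `q` pin it down on a period, hence everywhere.
-/

open Set Real NNReal

theorem taylor_lower_of_lipschitzWith_deriv {f : ℝ → ℝ} {K : ℝ≥0}
    (hf : Differentiable ℝ f) (hL : LipschitzWith K (deriv f)) (t u : ℝ) :
    f t + u * deriv f t - K * u ^ 2 / 2 ≤ f (t + u) := by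
  set d := deriv f t
  set G : ℝ → ℝ := fun v => f (t + v) - v * d + K * v ^ 2 / 2 with hG_def
  have hG : ∀ v, HasDerivAt G (deriv f (t + v) - d + K * v) v := fun v =>
    ((((hf (t + v)).hasDerivAt.comp_const_add t v).sub (hasDerivAt_mul_const d)).add
      (((hasDerivAt_pow 2 v).const_mul (K : ℝ)).div_const 2)).congr_deriv (by push_cast; ring)
  have hGc : Continuous G := continuous_iff_continuousAt.2 fun v => (hG v).continuousAt
  have hGd : Differentiable ℝ G := fun v => (hG v).differentiableAt
  have hslope : ∀ v, |deriv f (t + v) - d| ≤ K * |v| := fun v => by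
    simpa [Real.dist_eq] using hL.dist_le_mul (t + v) t
  have hmin : G 0 ≤ G u := by
    rcases le_total 0 u with hu | hu
    · refine monotoneOn_of_deriv_nonneg (convex_Ici 0) hGc.continuousOn hGd.differentiableOn
        (fun v hv => ?_) self_mem_Ici hu hu
      rw [interior_Ici] at hv
      have := hslope v
      rw [abs_of_pos (show (0 : ℝ) < v from hv)] at this
      rw [(hG v).deriv]
      linarith [abs_le.1 this]
    · refine antitoneOn_of_deriv_nonpos (convex_Iic 0) hGc.continuousOn hGd.differentiableOn
        (fun v hv => ?_) hu self_mem_Iic hu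
      rw [interior_Iic] at hv
      have := hslope v
      rw [abs_of_neg (show v < 0 from hv)] at this
      rw [(hG v).deriv]
      linarith [abs_le.1 this]
  simp only [hG_def] at hmin
  norm_num at hmin
  linarith

theorem abs_taylor_remainder_le_of_lipschitzWith_deriv {f : ℝ → ℝ} {K : ℝ≥0}
    (hf : Differentiable ℝ f) (hL : LipschitzWith K (deriv f)) (t u : ℝ) :
    |f (t + u) - f t - u * deriv f t| ≤ K * u ^ 2 / 2 := by
  have hlower := taylor_lower_of_lipschitzWith_deriv hf hL t u
  have hupper := taylor_lower_of_lipschitzWith_deriv hf.neg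
    (by rw [deriv.neg']; exact hL.neg) t u
  simp only [deriv.neg', Pi.neg_apply] at hupper
  rw [abs_le]
  constructor <;> linarith

theorem sq_deriv_le_of_lipschitzWith_one_deriv {f : ℝ → ℝ} {M : ℝ}
    (hf : Differentiable ℝ f) (hL : LipschitzWith 1 (deriv f)) (hM : ∀ t, |f t| ≤ M)
    (t : ℝ) :
    deriv f t ^ 2 ≤ 2 * (M - |f t|) := by
  set d := deriv f t
  have hforward := abs_le.1 (abs_taylor_remainder_le_of_lipschitzWith_deriv hf hL t d)
  have hbackward := abs_le.1 (abs_taylor_remainder_le_of_lipschitzWith_deriv hf hL t (-d))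
  have hMf := abs_le.1 (hM (t + d))
  have hMb := abs_le.1 (hM (t + -d))
  push_cast at hforward hbackward
  rcases abs_cases (f t) with ⟨h, _⟩ | ⟨h, _⟩ <;> rw [h] <;> nlinarith

noncomputable def triangleWave (a t : ℝ) : ℝ :=
  Metric.infDist t (range fun k : ℤ => a + 4 * a * k) - a

theorem triangleWave_lipschitz (a : ℝ) : LipschitzWith 1 (triangleWave a) :=
  LipschitzWith.of_dist_le_mul fun x y => by
    simpa [triangleWave, Real.dist_eq, sub_sub_sub_cancel_right] using
      (Metric.lipschitz_infDist_pt (s := range fun k : ℤ => a + 4 * a * k)).dist_le_mul x y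

theorem triangleWave_continuous (a : ℝ) : Continuous (triangleWave a) :=
  (triangleWave_lipschitz a).continuous

theorem triangleWave_periodic (a : ℝ) : Function.Periodic (triangleWave a) (4 * a) := by
  intro t
  set S := range fun k : ℤ => a + 4 * a * k
  have hshift : (· + 4 * a) '' S = S :=
    calc (· + 4 * a) '' S = range ((fun k : ℤ => a + 4 * a * k) ∘ Equiv.addRight 1) := by
          rw [← range_comp]
          congr 1
          ext k
          simp only [Function.comp_apply, Equiv.coe_addRight, Int.cast_add, Int.cast_one]
          ring
      _ = S := (Equiv.addRight 1).surjective.range_comp _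
  have := Metric.infDist_image (x := t) (t := S) (isometry_add_right (4 * a))
  simp only [hshift] at this
  exact congrArg (· - a) this

theorem triangleWave_eq_abs_sub {a t : ℝ} (ha : 0 ≤ a) (ht : |t - a| ≤ 2 * a) :
    triangleWave a t = |t - a| - a := by
  rw [triangleWave, sub_left_inj]
  refine le_antisymm ?_ ((Metric.le_infDist (range_nonempty _)).2 ?_)
  · simpa [Real.dist_eq] using
      Metric.infDist_le_dist_of_mem (mem_range_self (f := fun k : ℤ => a + 4 * a * k) 0)
  rintro _ ⟨k, rfl⟩
  rw [Real.dist_eq]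
  rcases eq_or_ne k 0 with rfl | hk
  · simp
  · have hk : (1 : ℝ) ≤ |(k : ℝ)| := by exact_mod_cast Int.one_le_abs hk
    have hfar : 4 * a ≤ |4 * a * k| := by
      rw [abs_mul, abs_of_nonneg (by linarith)]
      nlinarith
    have := abs_sub_abs_le_abs_sub (4 * a * k) (t - a)
    rw [show 4 * a * k - (t - a) = -(t - (a + 4 * a * k)) by ring, abs_neg] at this
    linarith

theorem triangleWave_of_mem_Icc_neg {a t : ℝ} (ht : t ∈ Icc (-a) a) :
    triangleWave a t = -t := by
  have ha : 0 ≤ a := by linarith [ht.1, ht.2]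
  rw [triangleWave_eq_abs_sub ha (by rw [abs_le]; constructor <;> linarith [ht.1, ht.2]),
    abs_of_nonpos (by linarith [ht.2])]
  ring

theorem triangleWave_of_mem_Icc {a t : ℝ} (ht : t ∈ Icc a (3 * a)) :
    triangleWave a t = t - 2 * a := by
  have ha : 0 ≤ a := by linarith [ht.1, ht.2]
  rw [triangleWave_eq_abs_sub ha (by rw [abs_le]; constructor <;> linarith [ht.1, ht.2]),
    abs_of_nonneg (by linarith [ht.1])]
  ring

/-- For `a = √2` this is the comparison function `q` of the statement. -/
noncomputable def kolmogorovComparison (a t : ℝ) : ℝ :=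
  a ^ 2 / 2 + ∫ u in (0 : ℝ)..t, triangleWave a u

theorem hasDerivAt_kolmogorovComparison (a t : ℝ) :
    HasDerivAt (kolmogorovComparison a) (triangleWave a t) t :=
  (intervalIntegral.integral_hasDerivAt_right ((triangleWave_continuous a).intervalIntegrable _ _)
    ((triangleWave_continuous a).stronglyMeasurableAtFilter _ _)
    (triangleWave_continuous a).continuousAt).const_add _

theorem differentiable_kolmogorovComparison (a : ℝ) :
    Differentiable ℝ (kolmogorovComparison a) :=
  fun t => (hasDerivAt_kolmogorovComparison a t).differentiableAt

theorem deriv_kolmogorovComparison (a : ℝ) : deriv (kolmogorovComparison a) = triangleWave a :=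
  funext fun t => (hasDerivAt_kolmogorovComparison a t).deriv

theorem integral_triangleWave_of_mem_Icc_neg {a s t : ℝ} (hs : s ∈ Icc (-a) a)
    (ht : t ∈ Icc (-a) a) : ∫ u in s..t, triangleWave a u = (s ^ 2 - t ^ 2) / 2 := by
  rw [intervalIntegral.integral_congr (g := fun u => -u)
    fun u hu => triangleWave_of_mem_Icc_neg (uIcc_subset_Icc hs ht hu),
    intervalIntegral.integral_neg, integral_id]
  ring

theorem integral_triangleWave_of_mem_Icc {a s t : ℝ} (hs : s ∈ Icc a (3 * a))
    (ht : t ∈ Icc a (3 * a)) :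
    ∫ u in s..t, triangleWave a u = ((t - 2 * a) ^ 2 - (s - 2 * a) ^ 2) / 2 := by
  rw [intervalIntegral.integral_congr (g := fun u => u - 2 * a)
    fun u hu => triangleWave_of_mem_Icc (uIcc_subset_Icc hs ht hu),
    intervalIntegral.integral_sub intervalIntegral.intervalIntegrable_id
      intervalIntegrable_const,
    integral_id, intervalIntegral.integral_const, smul_eq_mul]
  ring

theorem kolmogorovComparison_of_mem_Icc_neg {a t : ℝ} (ht : t ∈ Icc (-a) a) :
    kolmogorovComparison a t = a ^ 2 / 2 - t ^ 2 / 2 := by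
  have h0 : (0 : ℝ) ∈ Icc (-a) a := ⟨by linarith [ht.1, ht.2], by linarith [ht.1, ht.2]⟩
  rw [kolmogorovComparison, integral_triangleWave_of_mem_Icc_neg h0 ht]
  ring

theorem kolmogorovComparison_of_mem_Icc {a t : ℝ} (ht : t ∈ Icc a (3 * a)) :
    kolmogorovComparison a t = (t - 2 * a) ^ 2 / 2 - a ^ 2 / 2 := by
  have ha : 0 ≤ a := by linarith [ht.1, ht.2]
  have hint := (triangleWave_continuous a).intervalIntegrable (μ := MeasureTheory.volume)
  rw [kolmogorovComparison,
    ← intervalIntegral.integral_add_adjacent_intervals (hint 0 a) (hint a t),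
    integral_triangleWave_of_mem_Icc_neg ⟨by linarith, ha⟩ ⟨by linarith, le_rfl⟩,
    integral_triangleWave_of_mem_Icc ⟨le_rfl, by linarith⟩ ht]
  ring

theorem kolmogorovComparison_periodic {a : ℝ} (ha : 0 ≤ a) :
    Function.Periodic (kolmogorovComparison a) (4 * a) := by
  intro t
  have hint := (triangleWave_continuous a).intervalIntegrable (μ := MeasureTheory.volume)
  have hmean : ∫ u in -a..-a + 4 * a, triangleWave a u = 0 := by
    rw [show -a + 4 * a = 3 * a by ring,
      ← intervalIntegral.integral_add_adjacent_intervals (hint (-a) a) (hint a (3 * a)),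
      integral_triangleWave_of_mem_Icc_neg ⟨le_rfl, by linarith⟩ ⟨by linarith, le_rfl⟩,
      integral_triangleWave_of_mem_Icc ⟨le_rfl, by linarith⟩ ⟨by linarith, le_rfl⟩]
    ring
  rw [← sub_eq_zero, kolmogorovComparison, kolmogorovComparison, add_sub_add_left_eq_sub,
    intervalIntegral.integral_interval_sub_left (hint _ _) (hint _ _),
    (triangleWave_periodic a).intervalIntegral_add_eq t (-a), hmean]

theorem abs_kolmogorovComparison_le {a : ℝ} (ha : 0 < a) (t : ℝ) :
    |kolmogorovComparison a t| ≤ a ^ 2 / 2 := by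
  obtain ⟨s, ⟨hs₁, hs₂⟩, hts⟩ :=
    (kolmogorovComparison_periodic ha.le).exists_mem_Ico (by linarith) t (-a)
  rw [hts, abs_le]
  rcases le_total s a with h | h
  · rw [kolmogorovComparison_of_mem_Icc_neg ⟨hs₁, h⟩]
    constructor <;> nlinarith
  · rw [kolmogorovComparison_of_mem_Icc ⟨h, by linarith⟩]
    constructor <;> nlinarith

theorem eq_kolmogorovComparison {a : ℝ} (ha : 0 < a) {q : ℝ → ℝ}
    (hper : Function.Periodic q (4 * a))
    (hcap : ∀ t, |t| ≤ a → q t = a ^ 2 / 2 - t ^ 2 / 2)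
    (hanti : ∀ t, q (t + 2 * a) = -q t) :
    q = kolmogorovComparison a := by
  funext t
  rw [← sub_eq_zero]
  obtain ⟨s, ⟨hs₁, hs₂⟩, hts⟩ :=
    (hper.sub (kolmogorovComparison_periodic ha.le)).exists_mem_Ico (by linarith) t (-a)
  rw [Pi.sub_apply, Pi.sub_apply] at hts
  rw [hts, sub_eq_zero]
  rcases le_total s a with h | h
  · rw [hcap s (abs_le.2 ⟨hs₁, h⟩), kolmogorovComparison_of_mem_Icc_neg ⟨hs₁, h⟩]
  · have := hanti (s - 2 * a)
    rw [sub_add_cancel] at this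
    rw [this, hcap _ (abs_le.2 ⟨by linarith, by linarith⟩),
      kolmogorovComparison_of_mem_Icc ⟨h, by linarith⟩]
    ring

/-- **Kolmogorov–Landau inequality on `ℝ` for `n = 2`.** Every differentiable
`f : ℝ → ℝ` with `|f| ≤ 1` and `f'` Lipschitz of constant `1` satisfies
`|f'(t)| ≤ √(2(1 - |f(t)|))` for all `t`; in particular the supremum of
`‖f'‖_∞` over this class equals `√2`, attained by the comparison function
`q`. -/
theorem kolmogorov_landau_n2 :
    (∀ f : ℝ → ℝ, Differentiable ℝ f → LipschitzWith 1 (deriv f) →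
      (∀ t : ℝ, |f t| ≤ 1) →
      ∀ t : ℝ, |deriv f t| ≤ Real.sqrt (2 * (1 - |f t|))) ∧
    IsGreatest {y : ℝ | ∃ f : ℝ → ℝ, Differentiable ℝ f ∧
        LipschitzWith 1 (deriv f) ∧ (∀ t : ℝ, |f t| ≤ 1) ∧
        ∃ t : ℝ, y = |deriv f t|} (Real.sqrt 2) ∧
    ∀ q : ℝ → ℝ, Function.Periodic q (4 * Real.sqrt 2) →
      (∀ t : ℝ, |t| ≤ Real.sqrt 2 → q t = 1 - t ^ 2 / 2) →
      (∀ t : ℝ, q (t + 2 * Real.sqrt 2) = -q t) →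
      Differentiable ℝ q ∧ LipschitzWith 1 (deriv q) ∧
      (∀ t : ℝ, |q t| ≤ 1) ∧ ∃ t : ℝ, |deriv q t| = Real.sqrt 2 := by
  have hsqrt2 : 0 < √2 := by positivity
  have hhalf : √2 ^ 2 / 2 = 1 := by rw [sq_sqrt zero_le_two]; norm_num
  have hbound : ∀ f : ℝ → ℝ, Differentiable ℝ f → LipschitzWith 1 (deriv f) →
      (∀ t, |f t| ≤ 1) → ∀ t, |deriv f t| ≤ √(2 * (1 - |f t|)) :=
    fun f hf hL hM t => abs_le_sqrt (sq_deriv_le_of_lipschitzWith_one_deriv hf hL hM t)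
  set Q := kolmogorovComparison √2
  have hQ : Differentiable ℝ Q ∧ LipschitzWith 1 (deriv Q) ∧ (∀ t, |Q t| ≤ 1) ∧
      ∃ t, |deriv Q t| = √2 := by
    refine ⟨differentiable_kolmogorovComparison _, ?_, fun t => ?_, √2, ?_⟩
    · rw [deriv_kolmogorovComparison]
      exact triangleWave_lipschitz _
    · simpa only [hhalf] using abs_kolmogorovComparison_le hsqrt2 t
    · rw [deriv_kolmogorovComparison, triangleWave_of_mem_Icc_neg ⟨by linarith, le_rfl⟩,
        abs_neg, abs_of_pos hsqrt2]
  refine ⟨hbound, ⟨?_, ?_⟩, fun q hper hcap hanti => ?_⟩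
  · obtain ⟨hd, hL, hM, t, ht⟩ := hQ
    exact ⟨Q, hd, hL, hM, t, ht.symm⟩
  · rintro _ ⟨f, hf, hL, hM, t, rfl⟩
    exact (hbound f hf hL hM t).trans (sqrt_le_sqrt (by linarith [abs_nonneg (f t)]))
  · rwa [eq_kolmogorovComparison hsqrt2 hper (by rwa [hhalf]) hanti]
end

section
/- Let $f \in \mathcal{L}_2(T)$. Then there exists $g \in \mathcal{L}_2(1,1;\mathbb{R})$ whose restriction to $[0,T]$ equals $f$ if and only if $|f'(0)| \le \sqrt{2(1-|f(0)|)}$ and $|f'(T)| \le \sqrt{2(1-|f(T)|)}$. -/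
/-
Necessity is Landau's inequality: when `g'` is `1`-Lipschitz, `y ↦ g y + y ^ 2 / 2` is convex, so
`g (x + h) ≥ g x + h g'(x) - h ^ 2 / 2`; testing `|g| ≤ 1` at `x ± g'(x)` gives
`g'(x) ^ 2 ≤ 2 (1 - |g x|)`.

Sufficiency: beyond each endpoint, continue `f` by braking its slope to `0` at unit rate. The value
then moves by `f'(end) ^ 2 / 2 ≤ 1 - |f(end)|` in the direction of the slope and so stays in
`[-1, 1]`, while the slope, glued continuously at the endpoints, remains `1`-Lipschitz.
-/

open Set Real

section Taylor

variable {g : ℝ → ℝ} {K : NNReal}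

theorem DifferentiableAt.hasDerivAt_add_mul_sq {y : ℝ} (hg : DifferentiableAt ℝ g y) (c : ℝ) :
    HasDerivAt (fun y => g y + c * y ^ 2) (deriv g y + 2 * c * y) y :=
  (hg.hasDerivAt.add ((hasDerivAt_pow 2 y).const_mul c)).congr_deriv (by ring)

theorem convexOn_add_sq_of_lipschitzWith_deriv (hg : Differentiable ℝ g)
    (hK : LipschitzWith K (deriv g)) : ConvexOn ℝ univ fun y => g y + K / 2 * y ^ 2 := by
  refine Monotone.convexOn_univ_of_deriv
    (fun y => ((hg y).hasDerivAt_add_mul_sq _).differentiableAt) fun x y hxy => ?_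
  rw [((hg x).hasDerivAt_add_mul_sq _).deriv, ((hg y).hasDerivAt_add_mul_sq _).deriv]
  have := (abs_le.mp (hK.dist_le_mul y x)).1
  rw [Real.dist_eq, abs_of_nonneg (sub_nonneg.mpr hxy)] at this
  linarith

theorem add_deriv_mul_sub_le_of_lipschitzWith_deriv (hg : Differentiable ℝ g)
    (hK : LipschitzWith K (deriv g)) (x y : ℝ) :
    g x + deriv g x * (y - x) - K / 2 * (y - x) ^ 2 ≤ g y := by
  have hconv := convexOn_add_sq_of_lipschitzWith_deriv hg hK
  have hd := (hg x).hasDerivAt_add_mul_sq (K / 2)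
  rcases lt_trichotomy x y with hxy | rfl | hxy
  · have := hconv.deriv_le_slope (mem_univ x) (mem_univ y) hxy hd.differentiableAt
    rw [hd.deriv, slope_def_field, le_div_iff₀ (sub_pos.mpr hxy)] at this
    nlinarith
  · simp
  · have := hconv.slope_le_deriv (mem_univ y) (mem_univ x) hxy hd.differentiableAt
    rw [hd.deriv, slope_def_field, div_le_iff₀ (sub_pos.mpr hxy)] at this
    nlinarith

theorem abs_sub_sub_deriv_mul_le_of_lipschitzWith_deriv (hg : Differentiable ℝ g)
    (hK : LipschitzWith K (deriv g)) (x y : ℝ) :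
    |g y - g x - deriv g x * (y - x)| ≤ K / 2 * (y - x) ^ 2 := by
  have hlower := add_deriv_mul_sub_le_of_lipschitzWith_deriv hg hK x y
  have hupper := add_deriv_mul_sub_le_of_lipschitzWith_deriv hg.neg
    (by rw [deriv.neg']; exact hK.neg) x y
  simp only [Pi.neg_apply, deriv.neg'] at hupper
  rw [abs_le]
  constructor <;> linarith

theorem sq_deriv_le_of_abs_le {M : ℝ} (hg : Differentiable ℝ g)
    (hlip : LipschitzWith 1 (deriv g)) (hbound : ∀ t, |g t| ≤ M) (x : ℝ) :
    deriv g x ^ 2 ≤ 2 * (M - |g x|) := by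
  set c := deriv g x
  rcases le_or_gt 0 (g x) with hx | hx
  · have htaylor := abs_le.mp (abs_sub_sub_deriv_mul_le_of_lipschitzWith_deriv hg hlip x (x + c))
    have := (abs_le.mp (hbound (x + c))).2
    rw [abs_of_nonneg hx]
    push_cast at htaylor
    nlinarith
  · have htaylor := abs_le.mp (abs_sub_sub_deriv_mul_le_of_lipschitzWith_deriv hg hlip x (x - c))
    have := (abs_le.mp (hbound (x - c))).1
    rw [abs_of_neg hx]
    push_cast at htaylor
    nlinarith

end Taylor

/-- `𝓛₂` on an arbitrary set, with `g'` standing for the derivative: `InL2 T` is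
`InL2On (Icc 0 T)`, and `InL2On univ` is `𝓛₂(1,1;ℝ)`. -/
structure InL2On (s : Set ℝ) (g g' : ℝ → ℝ) : Prop where
  hasDerivWithinAt : ∀ x ∈ s, HasDerivWithinAt g (g' x) s x
  abs_le_one : ∀ x ∈ s, |g x| ≤ 1
  lipschitzOnWith : LipschitzOnWith 1 g' s

section Gluing

variable {s t : Set ℝ} {a : ℝ}

theorem eqOn_piecewise_Iic_Ici {φ ψ : ℝ → ℝ} (h : φ a = ψ a) :
    EqOn ((Iic a).piecewise φ ψ) ψ (Ici a) := by
  intro x (hx : a ≤ x)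
  rcases hx.eq_or_lt with rfl | hax
  · simp [h]
  · simp [piecewise, not_le.mpr hax]

theorem hasDerivWithinAt_union_piecewise_Iic {φ ψ φ' ψ' : ℝ → ℝ}
    (hsa : s ⊆ Iic a) (hta : t ⊆ Ici a) (hs : IsClosed s) (ht : IsClosed t)
    (hφ : ∀ x ∈ s, HasDerivWithinAt φ (φ' x) s x)
    (hψ : ∀ x ∈ t, HasDerivWithinAt ψ (ψ' x) t x) (ha : φ a = ψ a) (ha' : φ' a = ψ' a)
    (x : ℝ) :
    HasDerivWithinAt ((Iic a).piecewise φ ψ) ((Iic a).piecewise φ' ψ' x) (s ∪ t) x := by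
  have hout : ∀ u : Set ℝ, IsClosed u → x ∉ u →
      HasDerivWithinAt ((Iic a).piecewise φ ψ) ((Iic a).piecewise φ' ψ' x) u x :=
    fun u hu hxu => HasFDerivWithinAt.of_notMem_closure (by rwa [hu.closure_eq])
  refine HasDerivWithinAt.union ?_ ?_
  · by_cases hxs : x ∈ s
    · rw [piecewise_eqOn _ _ _ (hsa hxs)]
      exact (hφ x hxs).congr_of_mem (fun y hy => piecewise_eqOn _ _ _ (hsa hy)) hxs
    · exact hout s hs hxs
  · by_cases hxt : x ∈ t
    · rw [eqOn_piecewise_Iic_Ici ha' (hta hxt)]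
      exact (hψ x hxt).congr_of_mem (fun y hy => eqOn_piecewise_Iic_Ici ha (hta hy)) hxt
    · exact hout t ht hxt

theorem LipschitzOnWith.union_of_subset_Iic_Ici {K : NNReal} {g : ℝ → ℝ}
    (hsa : s ⊆ Iic a) (hta : t ⊆ Ici a) (has : a ∈ s) (hat : a ∈ t)
    (hgs : LipschitzOnWith K g s) (hgt : LipschitzOnWith K g t) :
    LipschitzOnWith K g (s ∪ t) := by
  rw [lipschitzOnWith_iff_dist_le_mul] at hgs hgt ⊢
  have hcross : ∀ x ∈ s, ∀ y ∈ t, dist (g x) (g y) ≤ K * dist x y := fun x hx y hy =>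
    calc dist (g x) (g y) ≤ dist (g x) (g a) + dist (g a) (g y) := dist_triangle _ _ _
      _ ≤ K * dist x a + K * dist a y := add_le_add (hgs x hx a has) (hgt a hat y hy)
      _ = K * dist x y := by
        have hxa : x ≤ a := hsa hx
        have hay : a ≤ y := hta hy
        rw [Real.dist_eq, Real.dist_eq, Real.dist_eq, abs_of_nonpos (by linarith),
          abs_of_nonpos (by linarith), abs_of_nonpos (by linarith)]
        ring
  rintro x (hx | hx) y (hy | hy)
  · exact hgs x hx y hy
  · exact hcross x hx y hy
  · rw [dist_comm, dist_comm x]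
    exact hcross y hy x hx
  · exact hgt x hx y hy

theorem InL2On.union_piecewise_Iic {φ ψ φ' ψ' : ℝ → ℝ} (hφ : InL2On s φ φ')
    (hψ : InL2On t ψ ψ') (hsa : s ⊆ Iic a) (hta : t ⊆ Ici a) (hs : IsClosed s)
    (ht : IsClosed t) (has : a ∈ s) (hat : a ∈ t) (ha : φ a = ψ a) (ha' : φ' a = ψ' a) :
    InL2On (s ∪ t) ((Iic a).piecewise φ ψ) ((Iic a).piecewise φ' ψ') where
  hasDerivWithinAt x _ := hasDerivWithinAt_union_piecewise_Iic hsa hta hs ht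
    hφ.hasDerivWithinAt hψ.hasDerivWithinAt ha ha' x
  abs_le_one := by
    rintro x (hx | hx)
    · rw [piecewise_eqOn _ _ _ (hsa hx)]
      exact hφ.abs_le_one x hx
    · rw [eqOn_piecewise_Iic_Ici ha (hta hx)]
      exact hψ.abs_le_one x hx
  lipschitzOnWith := by
    refine .union_of_subset_Iic_Ici hsa hta has hat (fun x hx y hy => ?_) (fun x hx y hy => ?_)
    · rw [piecewise_eqOn _ _ _ (hsa hx), piecewise_eqOn _ _ _ (hsa hy)]
      exact hφ.lipschitzOnWith hx hy
    · rw [eqOn_piecewise_Iic_Ici ha' (hta hx), eqOn_piecewise_Iic_Ici ha' (hta hy)]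
      exact hψ.lipschitzOnWith hx hy

theorem InL2On.hasDerivAt_of_univ {g g' : ℝ → ℝ} (h : InL2On univ g g') (x : ℝ) :
    HasDerivAt g (g' x) x :=
  hasDerivWithinAt_univ.mp (h.hasDerivWithinAt x (mem_univ x))

end Gluing

theorem hasDerivAt_max_zero_sq (x : ℝ) : HasDerivAt (fun y => max y 0 ^ 2) (2 * max x 0) x := by
  have hglue := hasDerivWithinAt_union_piecewise_Iic (a := 0) (φ := fun _ => 0) (ψ := (· ^ 2))
    (φ' := fun _ => 0) (ψ' := (2 * ·)) subset_rfl subset_rfl isClosed_Iic isClosed_Ici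
    (fun y _ => hasDerivWithinAt_const y _ 0)
    (fun y _ => ((hasDerivAt_pow 2 y).congr_deriv (by ring)).hasDerivWithinAt) (by simp)
    (by simp) x
  have hpiece (y : ℝ) :
      (Iic 0).piecewise (fun _ => 0) (· ^ 2) y = max y 0 ^ 2 ∧
        (Iic 0).piecewise (fun _ => 0) (2 * ·) y = 2 * max y 0 := by
    rcases le_or_gt y 0 with hy | hy
    · simp [hy]
    · simp [hy.not_ge, hy.le]
  rw [Iic_union_Ici, hasDerivWithinAt_univ, (hpiece x).2, funext fun y => (hpiece y).1] at hglue
  exact hglue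

theorem Real.sign_mul_abs (b : ℝ) : Real.sign b * |b| = b := by
  rcases lt_trichotomy b 0 with hb | rfl | hb
  · rw [Real.sign_of_neg hb, abs_of_neg hb]; ring
  · simp
  · rw [Real.sign_of_pos hb, abs_of_pos hb]; ring

theorem Real.abs_sign_le_one (b : ℝ) : |Real.sign b| ≤ 1 := by
  rcases Real.sign_apply_eq b with h | h | h <;> simp [h]

/-- Starting from value `a` with slope `b`, the slope is driven to `0` at unit rate and then
kept there. -/
noncomputable def brakingCurve (a b u : ℝ) : ℝ :=
  a + Real.sign b * ((b ^ 2 - max (|b| - u) 0 ^ 2) / 2)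

noncomputable def brakingSlope (b u : ℝ) : ℝ :=
  Real.sign b * max (|b| - u) 0

theorem brakingCurve_zero (a b : ℝ) : brakingCurve a b 0 = a := by
  simp [brakingCurve]

theorem brakingSlope_zero (b : ℝ) : brakingSlope b 0 = b := by
  simp [brakingSlope, Real.sign_mul_abs]

theorem hasDerivAt_brakingCurve (a b u : ℝ) :
    HasDerivAt (brakingCurve a b) (brakingSlope b u) u := by
  have hsq := (hasDerivAt_max_zero_sq (|b| - u)).comp u ((hasDerivAt_id u).const_sub |b|)
  refine ((((hsq.const_sub (b ^ 2)).div_const 2).const_mul (Real.sign b)).const_add a).congr_deriv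
    ?_
  rw [brakingSlope]
  ring

theorem lipschitzWith_brakingSlope (b : ℝ) : LipschitzWith 1 (brakingSlope b) := by
  refine LipschitzWith.of_dist_le_mul fun u v => ?_
  simp only [brakingSlope, Real.dist_eq, NNReal.coe_one, one_mul, ← mul_sub, abs_mul]
  calc |Real.sign b| * |max (|b| - u) 0 - max (|b| - v) 0| ≤ 1 * |(|b| - u) - (|b| - v)| :=
        mul_le_mul (Real.abs_sign_le_one b) (abs_max_sub_max_le_abs _ _ _) (abs_nonneg _)
          zero_le_one
    _ = |u - v| := by rw [one_mul, ← abs_neg]; ring_nf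

theorem abs_brakingCurve_le_one {a b u : ℝ} (hb : b ^ 2 ≤ 2 * (1 - |a|)) (hu : 0 ≤ u) :
    |brakingCurve a b u| ≤ 1 := by
  set m := max (|b| - u) 0
  have hm : 0 ≤ m := le_max_right _ _
  have hmb : m ≤ |b| := max_le (by linarith) (abs_nonneg b)
  have hgain : |(b ^ 2 - m ^ 2) / 2| ≤ 1 - |a| := by
    rw [abs_of_nonneg (by nlinarith [sq_abs b])]
    nlinarith
  calc |brakingCurve a b u| ≤ |a| + |Real.sign b| * |(b ^ 2 - m ^ 2) / 2| := by
        rw [brakingCurve, ← abs_mul]; exact abs_add_le _ _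
    _ ≤ |a| + 1 * (1 - |a|) := by gcongr; exact Real.abs_sign_le_one b
    _ = 1 := by ring

theorem inL2On_Ici_brakingCurve {a b : ℝ} (hb : b ^ 2 ≤ 2 * (1 - |a|)) (c : ℝ) :
    InL2On (Ici c) (fun t => brakingCurve a b (t - c)) (fun t => brakingSlope b (t - c)) where
  hasDerivWithinAt t _ :=
    ((hasDerivAt_brakingCurve a b (t - c)).comp_sub_const t c).hasDerivWithinAt
  abs_le_one _ ht := abs_brakingCurve_le_one hb (sub_nonneg.mpr ht)
  lipschitzOnWith := (LipschitzWith.of_dist_le_mul fun t t' => by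
    simpa [dist_sub_right] using (lipschitzWith_brakingSlope b).dist_le_mul (t - c) (t' - c)
    ).lipschitzOnWith

theorem inL2On_Iic_brakingCurve {a b : ℝ} (hb : b ^ 2 ≤ 2 * (1 - |a|)) (c : ℝ) :
    InL2On (Iic c) (fun t => brakingCurve a (-b) (c - t))
      (fun t => -brakingSlope (-b) (c - t)) where
  hasDerivWithinAt t _ :=
    ((hasDerivAt_brakingCurve a (-b) (c - t)).comp_const_sub c t).hasDerivWithinAt
  abs_le_one _ ht := abs_brakingCurve_le_one (by rwa [neg_sq]) (sub_nonneg.mpr ht)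
  lipschitzOnWith := (LipschitzWith.of_dist_le_mul fun t t' => by
    have := (lipschitzWith_brakingSlope (-b)).dist_le_mul (c - t) (c - t')
    rwa [dist_sub_left, ← dist_neg_neg] at this
    ).lipschitzOnWith

theorem InL2On.exists_extension_of_Icc {T : ℝ} (hT : 0 ≤ T) {f f' : ℝ → ℝ}
    (hf : InL2On (Icc 0 T) f f') (h0 : f' 0 ^ 2 ≤ 2 * (1 - |f 0|))
    (hT' : f' T ^ 2 ≤ 2 * (1 - |f T|)) :
    ∃ g g' : ℝ → ℝ, InL2On univ g g' ∧ EqOn g f (Icc 0 T) := by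
  have h0T : (0 : ℝ) ∈ Icc 0 T := left_mem_Icc.mpr hT
  have hright := hf.union_piecewise_Iic (inL2On_Ici_brakingCurve hT' T) Icc_subset_Iic_self
    subset_rfl isClosed_Icc isClosed_Ici (right_mem_Icc.mpr hT) self_mem_Ici
    (by simp [brakingCurve_zero]) (by simp [brakingSlope_zero])
  rw [Icc_union_Ici_eq_Ici hT] at hright
  have hall := (inL2On_Iic_brakingCurve h0 0).union_piecewise_Iic hright subset_rfl subset_rfl
    isClosed_Iic isClosed_Ici self_mem_Iic self_mem_Ici
    (by simp [brakingCurve_zero, piecewise_eqOn _ _ _ (Icc_subset_Iic_self h0T)])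
    (by simp [brakingSlope_zero, piecewise_eqOn _ _ _ (Icc_subset_Iic_self h0T)])
  rw [Iic_union_Ici] at hall
  refine ⟨_, _, hall, fun t ht => ?_⟩
  rcases ht.1.eq_or_lt with rfl | ht0
  · simp [brakingCurve_zero]
  · simp [ht0.not_ge, ht.2]

/-- **Extension criterion.** For `f ∈ 𝓛₂(T)`, there exists
`g ∈ 𝓛₂(1,1;ℝ)` whose restriction to `[0,T]` equals `f` if and only if
`|f'(0)| ≤ √(2(1 - |f(0)|))` and `|f'(T)| ≤ √(2(1 - |f(T)|))`. -/
theorem extension_criterion (T : ℝ) (hT : 0 < T) (f f' : ℝ → ℝ)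
    (hf : InL2 T f f') :
    (∃ g : ℝ → ℝ, Differentiable ℝ g ∧ LipschitzWith 1 (deriv g) ∧
        (∀ t : ℝ, |g t| ≤ 1) ∧ EqOn g f (Icc 0 T)) ↔
    (|f' 0| ≤ Real.sqrt (2 * (1 - |f 0|)) ∧
     |f' T| ≤ Real.sqrt (2 * (1 - |f T|))) := by
  have hL2 : InL2On (Icc 0 T) f f' := ⟨hf.1, hf.2.1, hf.2.2⟩
  have hsqrt : ∀ x ∈ Icc 0 T, |f' x| ≤ √(2 * (1 - |f x|)) ↔ f' x ^ 2 ≤ 2 * (1 - |f x|) :=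
    fun x hx => by rw [Real.le_sqrt (abs_nonneg _) (by linarith [hL2.abs_le_one x hx]), sq_abs]
  have h0 : (0 : ℝ) ∈ Icc 0 T := left_mem_Icc.mpr hT.le
  have hT' : T ∈ Icc 0 T := right_mem_Icc.mpr hT.le
  rw [hsqrt 0 h0, hsqrt T hT']
  constructor
  · rintro ⟨g, hg, hlip, hbound, heq⟩
    have hderiv : ∀ x ∈ Icc 0 T, deriv g x = f' x := fun x hx =>
      (uniqueDiffOn_Icc hT x hx).eq_deriv _
        ((hg x).hasDerivAt.hasDerivWithinAt.congr_of_mem (fun y hy => (heq hy).symm) hx)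
        (hL2.hasDerivWithinAt x hx)
    rw [← heq h0, ← heq hT', ← hderiv 0 h0, ← hderiv T hT']
    exact ⟨sq_deriv_le_of_abs_le hg hlip hbound 0,
      sq_deriv_le_of_abs_le hg hlip hbound T⟩
  · rintro ⟨hbound0, hboundT⟩
    obtain ⟨g, g', hg, heq⟩ := hL2.exists_extension_of_Icc hT.le hbound0 hboundT
    have hderiv : deriv g = g' := funext fun x => (hg.hasDerivAt_of_univ x).deriv
    exact ⟨g, fun x => (hg.hasDerivAt_of_univ x).differentiableAt,
      hderiv ▸ lipschitzOnWith_univ.mp hg.lipschitzOnWith, fun t => hg.abs_le_one t (mem_univ t),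
      heq⟩
end

section
/- For $2 \le T \le 4$, $\sup_{f \in \mathcal{L}_2(T)} \int_0^T |f'(t)|\, dt = T^2/2 - 2T + 4$, attained by $f(t) = -1 + (t-2)^2/2$. -/
open Set MeasureTheory intervalIntegral

/-!
On an interval where `f'` keeps its sign, `∫ |f'| = |f y - f x| ≤ 2`. If `f'` vanishes somewhere,
let `z₁ ≤ z₂` be its first and last zeros in `[0, T]`. As `f'` is 1-Lipschitz, `|f' t|` is at most
the distance from `t` to any zero, so `[0, z₁]`, `[z₁, z₂]` and `[z₂, T]` contribute at most
`min 2 (z₁² / 2)`, `(z₂ - z₁)² / 4` and `min 2 ((T - z₂)² / 2)`, and for `T ≤ 4` these add up to at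
most `T² / 2 - 2T + 4`, with equality for `f' t = t - 2`, where `z₁ = z₂ = 2`.
-/

section

variable {f g : ℝ → ℝ} {a b c : ℝ}

theorem integral_abs_sub_const (hac : a ≤ c) (hcb : c ≤ b) :
    ∫ t in a..b, |t - c| = ((c - a) ^ 2 + (b - c) ^ 2) / 2 := by
  have habs : Continuous fun x : ℝ => |x| := continuous_abs
  rw [integral_comp_sub_right (fun x => |x|),
    ← integral_add_adjacent_intervals (habs.intervalIntegrable _ 0) (habs.intervalIntegrable 0 _)]
  have hneg : ∫ x in a - c..0, |x| = ∫ x in a - c..0, -x :=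
    integral_congr fun x hx => abs_of_nonpos (by
      rw [uIcc_of_le (by linarith)] at hx; exact hx.2)
  have hpos : ∫ x in (0 : ℝ)..b - c, |x| = ∫ x in (0 : ℝ)..b - c, x :=
    integral_congr fun x hx => abs_of_nonneg (by
      rw [uIcc_of_le (by linarith)] at hx; exact hx.1)
  rw [hneg, hpos, intervalIntegral.integral_neg, integral_id, integral_id]
  ring

theorem integral_abs_le_of_lipschitzOnWith_of_eq_zero (hg : LipschitzOnWith 1 g (Icc a b))
    (hc : c ∈ Icc a b) (hgc : g c = 0) :
    ∫ t in a..b, |g t| ≤ ((c - a) ^ 2 + (b - c) ^ 2) / 2 := by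
  have hab : a ≤ b := hc.1.trans hc.2
  calc ∫ t in a..b, |g t|
      ≤ ∫ t in a..b, |t - c| := by
        refine integral_mono_on hab (hg.continuousOn.abs.intervalIntegrable_of_Icc hab)
          ((continuous_id.sub continuous_const).abs.intervalIntegrable a b) fun t ht => ?_
        simpa [Real.dist_eq, hgc] using hg.dist_le_mul t ht c hc
    _ = ((c - a) ^ 2 + (b - c) ^ 2) / 2 := integral_abs_sub_const hc.1 hc.2

theorem integral_abs_le_of_lipschitzOnWith_of_eq_zero_of_eq_zero (hab : a ≤ b)
    (hg : LipschitzOnWith 1 g (Icc a b)) (hga : g a = 0) (hgb : g b = 0) :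
    ∫ t in a..b, |g t| ≤ (b - a) ^ 2 / 4 := by
  have ham : a ≤ (a + b) / 2 := by linarith
  have hmb : (a + b) / 2 ≤ b := by linarith
  set m := (a + b) / 2
  have hleft := integral_abs_le_of_lipschitzOnWith_of_eq_zero
    (hg.mono (Icc_subset_Icc_right hmb)) (left_mem_Icc.2 ham) hga
  have hright := integral_abs_le_of_lipschitzOnWith_of_eq_zero
    (hg.mono (Icc_subset_Icc_left ham)) (right_mem_Icc.2 hmb) hgb
  rw [← integral_add_adjacent_intervals
    ((hg.continuousOn.mono (Icc_subset_Icc_right hmb)).abs.intervalIntegrable_of_Icc ham)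
    ((hg.continuousOn.mono (Icc_subset_Icc_left ham)).abs.intervalIntegrable_of_Icc hmb)]
  have hsum : ((a - a) ^ 2 + (m - a) ^ 2) / 2 + ((b - m) ^ 2 + (b - b) ^ 2) / 2
      = (b - a) ^ 2 / 4 := by ring
  linarith

theorem ContinuousOn.nonneg_or_nonpos_of_ne_zero (hg : ContinuousOn g (Icc a b))
    (hne : ∀ t ∈ Ioo a b, g t ≠ 0) :
    (∀ t ∈ Icc a b, 0 ≤ g t) ∨ (∀ t ∈ Icc a b, g t ≤ 0) := by
  by_contra! ⟨⟨s, hs, hgs⟩, ⟨t, ht, hgt⟩⟩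
  obtain ⟨c, hc, hgc⟩ := intermediate_value_uIcc (hg.mono (uIcc_subset_Icc hs ht))
    (mem_uIcc.2 (Or.inl ⟨hgs.le, hgt.le⟩))
  have hcs : s ≠ c := by rintro rfl; linarith
  have hct : t ≠ c := by rintro rfl; linarith
  rcases mem_uIcc.1 hc with ⟨hsc, hct'⟩ | ⟨htc, hcs'⟩
  · exact hne c ⟨hs.1.trans_lt (hsc.lt_of_ne hcs), (hct'.lt_of_ne hct.symm).trans_le ht.2⟩ hgc
  · exact hne c ⟨ht.1.trans_lt (htc.lt_of_ne hct), (hcs'.lt_of_ne hcs.symm).trans_le hs.2⟩ hgc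

theorem integral_eq_sub_of_hasDerivWithinAt_Icc (hab : a ≤ b)
    (hf : ∀ t ∈ Icc a b, HasDerivWithinAt f (g t) (Icc a b) t) (hg : ContinuousOn g (Icc a b)) :
    ∫ t in a..b, g t = f b - f a :=
  integral_eq_sub_of_hasDerivAt_of_le hab (fun t ht => (hf t ht).continuousWithinAt)
    (fun t ht => (hf t (Ioo_subset_Icc_self ht)).hasDerivAt (Icc_mem_nhds ht.1 ht.2))
    (hg.intervalIntegrable_of_Icc hab)

theorem integral_abs_eq_abs_sub_of_ne_zero (hab : a ≤ b)
    (hf : ∀ t ∈ Icc a b, HasDerivWithinAt f (g t) (Icc a b) t) (hg : ContinuousOn g (Icc a b))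
    (hne : ∀ t ∈ Ioo a b, g t ≠ 0) :
    ∫ t in a..b, |g t| = |f b - f a| := by
  have of_nonneg : ∀ f g : ℝ → ℝ, (∀ t ∈ Icc a b, HasDerivWithinAt f (g t) (Icc a b) t) →
      ContinuousOn g (Icc a b) → (∀ t ∈ Icc a b, 0 ≤ g t) →
      ∫ t in a..b, |g t| = |f b - f a| := by
    intro f g hf hg hpos
    have habs : ∫ t in a..b, |g t| = ∫ t in a..b, g t :=
      integral_congr fun t ht => abs_of_nonneg (hpos t (by rwa [uIcc_of_le hab] at ht))
    rw [habs, ← integral_eq_sub_of_hasDerivWithinAt_Icc hab hf hg,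
      abs_of_nonneg (integral_nonneg hab fun t ht => hpos t ht)]
  rcases hg.nonneg_or_nonpos_of_ne_zero hne with hpos | hneg
  · exact of_nonneg f g hf hg hpos
  · rw [abs_sub_comm]
    simpa [neg_add_eq_sub] using of_nonneg (-f) (-g) (fun t ht => (hf t ht).neg) hg.neg
      fun t ht => neg_nonneg.2 (hneg t ht)

theorem ContinuousOn.exists_first_last_zero (hg : ContinuousOn g (Icc a b))
    (h : ∃ c ∈ Icc a b, g c = 0) :
    ∃ z₁ z₂, a ≤ z₁ ∧ z₁ ≤ z₂ ∧ z₂ ≤ b ∧ g z₁ = 0 ∧ g z₂ = 0 ∧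
      (∀ t ∈ Ioo a z₁, g t ≠ 0) ∧ (∀ t ∈ Ioo z₂ b, g t ≠ 0) := by
  set Z := Icc a b ∩ g ⁻¹' {0}
  have hZ : IsCompact Z := isCompact_Icc.of_isClosed_subset
    (hg.preimage_isClosed_of_isClosed isClosed_Icc isClosed_singleton) inter_subset_left
  have hZne : Z.Nonempty := let ⟨c, hc, hgc⟩ := h; ⟨c, hc, hgc⟩
  obtain ⟨⟨ha₁, hb₁⟩, hg₁⟩ := hZ.sInf_mem hZne
  obtain ⟨⟨ha₂, hb₂⟩, hg₂⟩ := hZ.sSup_mem hZne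
  refine ⟨sInf Z, sSup Z, ha₁, csInf_le_csSup hZne hZ.bddBelow hZ.bddAbove, hb₂, hg₁, hg₂,
    fun t ht hgt => ?_, fun t ht hgt => ?_⟩
  · exact (csInf_le hZ.bddBelow ⟨⟨ht.1.le, ht.2.le.trans hb₁⟩, hgt⟩).not_gt ht.2
  · exact (le_csSup hZ.bddAbove ⟨⟨ha₂.trans ht.1.le, ht.2.le⟩, hgt⟩).not_gt ht.1

end

theorem min_add_sq_add_min_le {a L b : ℝ} (ha : 0 ≤ a) (hL : 0 ≤ L) (hb : 0 ≤ b)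
    (h4 : a + L + b ≤ 4) :
    min 2 (a ^ 2 / 2) + L ^ 2 / 4 + min 2 (b ^ 2 / 2) ≤
      (a + L + b) ^ 2 / 2 - 2 * (a + L + b) + 4 := by
  rcases le_total a 2 with h1 | h1 <;> rcases le_total b 2 with h2 | h2
  · have hA := min_le_right 2 (a ^ 2 / 2)
    have hB := min_le_right 2 (b ^ 2 / 2)
    rcases le_total (a + b) 2 with h3 | h3
    · rcases le_total (a + L + b) 2 with h4 | h4
      · nlinarith [mul_nonneg ha hb, mul_nonneg ha hL, mul_nonneg hL hb]
      · nlinarith [sq_nonneg (L / 2 + (a + b - 2)), mul_nonneg ha hb,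
          mul_nonneg (by linarith : (0:ℝ) ≤ 2 - a - b) (by linarith : (0:ℝ) ≤ a + b)]
    · nlinarith [sq_nonneg L, mul_nonneg hL (by linarith : (0:ℝ) ≤ a + b - 2),
        mul_nonneg (by linarith : (0:ℝ) ≤ 2 - a) (by linarith : (0:ℝ) ≤ 2 - b)]
  · nlinarith [min_le_right 2 (a ^ 2 / 2), min_le_left 2 (b ^ 2 / 2), mul_nonneg ha hL, sq_nonneg L,
      mul_nonneg (by linarith : (0:ℝ) ≤ b - 2) (by linarith : (0:ℝ) ≤ b - 2 + 2 * a + 2 * L)]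
  · nlinarith [min_le_left 2 (a ^ 2 / 2), min_le_right 2 (b ^ 2 / 2), mul_nonneg hb hL, sq_nonneg L,
      mul_nonneg (by linarith : (0:ℝ) ≤ a - 2) (by linarith : (0:ℝ) ≤ a - 2 + 2 * b + 2 * L)]
  · nlinarith [min_le_left 2 (a ^ 2 / 2), min_le_left 2 (b ^ 2 / 2)]

theorem InL2.integral_abs_le_two {T x y : ℝ} {f g : ℝ → ℝ} (h : InL2 T f g) (hx : 0 ≤ x)
    (hxy : x ≤ y) (hy : y ≤ T) (hne : ∀ t ∈ Ioo x y, g t ≠ 0) :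
    ∫ t in x..y, |g t| ≤ 2 := by
  obtain ⟨hf, hbound, hg⟩ := h
  have hsub : Icc x y ⊆ Icc 0 T := Icc_subset_Icc hx hy
  rw [integral_abs_eq_abs_sub_of_ne_zero hxy (fun t ht => (hf t (hsub ht)).mono hsub)
    (hg.continuousOn.mono hsub) hne]
  have hfx := hbound x (hsub (left_mem_Icc.2 hxy))
  have hfy := hbound y (hsub (right_mem_Icc.2 hxy))
  linarith [abs_sub (f y) (f x)]

theorem InL2.integral_abs_le {T : ℝ} {f g : ℝ → ℝ} (h : InL2 T f g) (hT0 : 0 ≤ T)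
    (hT4 : T ≤ 4) : ∫ t in (0 : ℝ)..T, |g t| ≤ T ^ 2 / 2 - 2 * T + 4 := by
  have hg := h.2.2
  have hgc := hg.continuousOn
  by_cases hzero : ∃ c ∈ Icc 0 T, g c = 0
  · obtain ⟨z₁, z₂, h0z₁, hz₁z₂, hz₂T, hgz₁, hgz₂, hne₁, hne₂⟩ :=
      hgc.exists_first_last_zero hzero
    have hint : ∀ x y, 0 ≤ x → x ≤ y → y ≤ T → IntervalIntegrable (fun t => |g t|) volume x y :=
      fun x y hx hxy hy => (hgc.mono (Icc_subset_Icc hx hy)).abs.intervalIntegrable_of_Icc hxy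
    have hz₁T : z₁ ≤ T := hz₁z₂.trans hz₂T
    have hz₂ : 0 ≤ z₂ := h0z₁.trans hz₁z₂
    rw [← integral_add_adjacent_intervals (hint 0 z₂ le_rfl hz₂ hz₂T) (hint z₂ T hz₂ hz₂T le_rfl),
      ← integral_add_adjacent_intervals (hint 0 z₁ le_rfl h0z₁ hz₁T) (hint z₁ z₂ h0z₁ hz₁z₂ hz₂T)]
    have hleft : ∫ t in (0 : ℝ)..z₁, |g t| ≤ min 2 (z₁ ^ 2 / 2) := by
      refine le_min (h.integral_abs_le_two le_rfl h0z₁ hz₁T hne₁) ?_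
      simpa using integral_abs_le_of_lipschitzOnWith_of_eq_zero
        (hg.mono (Icc_subset_Icc_right hz₁T)) (right_mem_Icc.2 h0z₁) hgz₁
    have hmid : ∫ t in z₁..z₂, |g t| ≤ (z₂ - z₁) ^ 2 / 4 :=
      integral_abs_le_of_lipschitzOnWith_of_eq_zero_of_eq_zero hz₁z₂
        (hg.mono (Icc_subset_Icc h0z₁ hz₂T)) hgz₁ hgz₂
    have hright : ∫ t in z₂..T, |g t| ≤ min 2 ((T - z₂) ^ 2 / 2) := by
      refine le_min (h.integral_abs_le_two hz₂ hz₂T le_rfl hne₂) ?_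
      simpa using integral_abs_le_of_lipschitzOnWith_of_eq_zero
        (hg.mono (Icc_subset_Icc_left hz₂)) (left_mem_Icc.2 hz₂T) hgz₂
    have hsum := min_add_sq_add_min_le h0z₁ (sub_nonneg.2 hz₁z₂) (sub_nonneg.2 hz₂T)
      (show z₁ + (z₂ - z₁) + (T - z₂) ≤ 4 by linarith)
    rw [show z₁ + (z₂ - z₁) + (T - z₂) = T by ring] at hsum
    linarith
  · push Not at hzero
    have htotal := h.integral_abs_le_two le_rfl hT0 le_rfl
      fun t ht => hzero t (Ioo_subset_Icc_self ht)
    nlinarith [sq_nonneg (T - 2)]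

theorem inL2_shifted_parabola {T : ℝ} (hT4 : T ≤ 4) :
    InL2 T (fun t => -1 + (t - 2) ^ 2 / 2) (fun t => t - 2) := by
  refine ⟨fun t _ => ?_, fun t ht => ?_,
    LipschitzOnWith.of_dist_le_mul fun x _ y _ => by simp [Real.dist_eq]⟩
  · have h : HasDerivAt (fun y : ℝ => -1 + (y - 2) ^ 2 / 2) (2 * (t - 2) ^ 1 * 1 / 2) t :=
      ((((hasDerivAt_id' t).sub_const 2).pow 2).div_const 2).const_add (-1)
    rw [show 2 * (t - 2) ^ 1 * 1 / 2 = t - 2 by ring] at h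
    exact h.hasDerivWithinAt
  · rw [abs_le]
    constructor <;> nlinarith [ht.1, ht.2]

/-- For `2 ≤ T ≤ 4`, the supremum of the total variation
`∫₀ᵀ |f'(t)| dt` over `f ∈ 𝓛₂(T)` equals `T²/2 - 2T + 4`, attained by
`f(t) = -1 + (t-2)²/2`. -/
theorem total_variation_sup_medium_T (T : ℝ) (hT2 : 2 ≤ T) (hT4 : T ≤ 4) :
    IsGreatest {y : ℝ | ∃ f f' : ℝ → ℝ, InL2 T f f' ∧
        y = ∫ t in (0:ℝ)..T, |f' t|} (T ^ 2 / 2 - 2 * T + 4) ∧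
    InL2 T (fun t => -1 + (t - 2) ^ 2 / 2) (fun t => t - 2) ∧
    (∫ t in (0:ℝ)..T, |t - 2|) = T ^ 2 / 2 - 2 * T + 4 := by
  have hmem := inL2_shifted_parabola hT4
  have hval : ∫ t in (0:ℝ)..T, |t - 2| = T ^ 2 / 2 - 2 * T + 4 := by
    rw [integral_abs_sub_const (by norm_num) hT2]
    ring
  refine ⟨⟨⟨_, _, hmem, hval.symm⟩, ?_⟩, hmem, hval⟩
  rintro y ⟨f, g, hfg, rfl⟩
  exact hfg.integral_abs_le (by linarith) hT4
end

section
/- The function $\sigma_1(T) = \sup_{f \in \mathcal{L}_2(T)} \int_0^T |f'(t)|\,dt$ is subadditive: $\sigma_1(T_1 + T_2) \le \sigma_1(T_1) + \sigma_1(T_2)$ for all $T_1, T_2 > 0$. Consequently $\sigma_1(T) \le T + 2$ for all $T > 0$. -/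
open Set MeasureTheory intervalIntegral

/-- `σ₁(T) = sup_{f ∈ 𝓛₂(T)} ∫₀ᵀ |f'(t)| dt`. -/
noncomputable def sigma1 (T : ℝ) : ℝ :=
  sSup {y : ℝ | ∃ f f' : ℝ → ℝ, InL2 T f f' ∧ y = ∫ t in (0:ℝ)..T, |f' t|}


/-! On an interval of length `L ≤ 2` one has `∫ |f'| ≤ 2`: if `f'` vanishes at some `z`, the
Lipschitz bound `|f'(t)| ≤ |t - z|` gives at most `L² / 2`; otherwise `f'` has constant sign by
Darboux's theorem, and the integral is `|f(b) - f(a)| ≤ 2`. Chopping `[0, T]` into such pieces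
bounds every `∫₀ᵀ |f'|` by `T + 2`, so the supremum `σ₁(T)` is finite. Subadditivity follows by
splitting `[0, T₁ + T₂]` at `T₁`: the restriction to `[0, T₁]` and the translate of the
restriction to `[T₁, T₁ + T₂]` are again in the classes `𝓛₂(T₁)` and `𝓛₂(T₂)`. -/

theorem integral_abs_sub_of_mem_Icc {a b z : ℝ} (hz : z ∈ Icc a b) :
    ∫ t in a..b, |t - z| = ((z - a) ^ 2 + (b - z) ^ 2) / 2 := by
  have hcont : Continuous fun t : ℝ => |t - z| := by fun_prop
  rw [← integral_add_adjacent_intervals (hcont.intervalIntegrable a z)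
    (hcont.intervalIntegrable z b)]
  have left : ∫ t in a..z, |t - z| = ∫ t in a..z, (z - t) :=
    integral_congr fun t ht => by
      rw [uIcc_of_le hz.1] at ht
      simp only [abs_sub_comm t z, abs_of_nonneg (sub_nonneg.2 ht.2)]
  have right : ∫ t in z..b, |t - z| = ∫ t in z..b, (t - z) :=
    integral_congr fun t ht => by
      rw [uIcc_of_le hz.2] at ht
      exact abs_of_nonneg (sub_nonneg.2 ht.1)
  rw [left, right, integral_sub intervalIntegrable_const intervalIntegrable_id,
    integral_sub intervalIntegrable_id intervalIntegrable_const]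
  simp only [integral_id, intervalIntegral.integral_const, smul_eq_mul]
  ring

theorem LipschitzOnWith.integral_abs_le_of_eq_zero {g : ℝ → ℝ} {a b z : ℝ}
    (hg : LipschitzOnWith 1 g (Icc a b)) (hz : z ∈ Icc a b) (hgz : g z = 0) :
    ∫ t in a..b, |g t| ≤ ((z - a) ^ 2 + (b - z) ^ 2) / 2 := by
  have hab : a ≤ b := hz.1.trans hz.2
  calc ∫ t in a..b, |g t| ≤ ∫ t in a..b, |t - z| := by
        refine integral_mono_on hab (hg.continuousOn.abs.intervalIntegrable_of_Icc hab)
          ((continuous_id.sub continuous_const).abs.intervalIntegrable a b) fun t ht => ?_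
        simpa [hgz, Real.dist_eq] using hg.dist_le_mul t ht z hz
    _ = ((z - a) ^ 2 + (b - z) ^ 2) / 2 := integral_abs_sub_of_mem_Icc hz

namespace InL2

variable {T : ℝ} {f f' : ℝ → ℝ}

theorem continuousOn_deriv (h : InL2 T f f') : ContinuousOn f' (Icc 0 T) :=
  h.2.2.continuousOn

theorem mono (h : InL2 T f f') {S : ℝ} (hST : S ≤ T) : InL2 S f f' :=
  have hsub : Icc 0 S ⊆ Icc 0 T := Icc_subset_Icc le_rfl hST
  ⟨fun t ht => (h.1 t (hsub ht)).mono hsub, fun t ht => h.2.1 t (hsub ht), h.2.2.mono hsub⟩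

theorem comp_add_right (h : InL2 T f f') {a S : ℝ} (ha : 0 ≤ a) (haS : a + S ≤ T) :
    InL2 S (fun s => f (s + a)) (fun s => f' (s + a)) := by
  have hmaps : MapsTo (· + a) (Icc 0 S) (Icc 0 T) := fun s hs =>
    ⟨by linarith [hs.1], by linarith [hs.2]⟩
  refine ⟨fun s hs => ?_, fun s hs => h.2.1 _ (hmaps hs), fun x hx y hy => ?_⟩
  · simpa [Function.comp_def] using
      (h.1 _ (hmaps hs)).comp s ((hasDerivAt_id s).add_const a).hasDerivWithinAt hmaps
  · simpa using h.2.2 (hmaps hx) (hmaps hy)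

theorem integral_deriv_s17 (h : InL2 T f f') (hT : 0 ≤ T) : ∫ t in (0:ℝ)..T, f' t = f T - f 0 :=
  integral_eq_sub_of_hasDerivAt_of_le hT (fun t ht => (h.1 t ht).continuousWithinAt)
    (fun t ht => (h.1 t (Ioo_subset_Icc_self ht)).hasDerivAt (Icc_mem_nhds ht.1 ht.2))
    (h.continuousOn_deriv.intervalIntegrable_of_Icc hT)

theorem integral_abs_deriv_add {T₁ T₂ : ℝ} (h : InL2 (T₁ + T₂) f f') (h₁ : 0 ≤ T₁)
    (h₂ : 0 ≤ T₂) :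
    ∫ t in (0:ℝ)..T₁ + T₂, |f' t| =
      (∫ t in (0:ℝ)..T₁, |f' t|) + ∫ t in (0:ℝ)..T₂, |f' (t + T₁)| := by
  have hint {a b : ℝ} (ha : a ∈ Icc 0 (T₁ + T₂)) (hb : b ∈ Icc 0 (T₁ + T₂)) :
      IntervalIntegrable (fun t => |f' t|) volume a b :=
    (h.continuousOn_deriv.abs.mono (uIcc_subset_Icc ha hb)).intervalIntegrable
  have h0 : (0:ℝ) ∈ Icc 0 (T₁ + T₂) := ⟨le_rfl, by linarith⟩
  have hT₁ : T₁ ∈ Icc 0 (T₁ + T₂) := ⟨h₁, by linarith⟩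
  have hT : T₁ + T₂ ∈ Icc 0 (T₁ + T₂) := ⟨by linarith, le_rfl⟩
  rw [← integral_add_adjacent_intervals (hint h0 hT₁) (hint hT₁ hT),
    integral_comp_add_right (fun t => |f' t|), zero_add, add_comm T₂]

theorem integral_abs_deriv_le_two (h : InL2 T f f') (hT : 0 ≤ T) (hT₂ : T ≤ 2) :
    ∫ t in (0:ℝ)..T, |f' t| ≤ 2 := by
  by_cases hzero : ∃ z ∈ Icc 0 T, f' z = 0
  · obtain ⟨z, hz, hz0⟩ := hzero
    have := h.2.2.integral_abs_le_of_eq_zero hz hz0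
    nlinarith [hz.1, hz.2]
  · push Not at hzero
    have hf0 := abs_le.1 (h.2.1 0 ⟨le_rfl, hT⟩)
    have hfT := abs_le.1 (h.2.1 T ⟨hT, le_rfl⟩)
    rcases hasDerivWithinAt_forall_lt_or_forall_gt_of_forall_ne (convex_Icc 0 T) h.1 hzero
      with hneg | hpos
    · have : ∫ t in (0:ℝ)..T, |f' t| = ∫ t in (0:ℝ)..T, -f' t :=
        integral_congr fun t ht => abs_of_neg (hneg t (by rwa [uIcc_of_le hT] at ht))
      rw [this, intervalIntegral.integral_neg, h.integral_deriv_s17 hT]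
      linarith
    · have : ∫ t in (0:ℝ)..T, |f' t| = ∫ t in (0:ℝ)..T, f' t :=
        integral_congr fun t ht => abs_of_pos (hpos t (by rwa [uIcc_of_le hT] at ht))
      rw [this, h.integral_deriv_s17 hT]
      linarith

theorem integral_abs_deriv_le (h : InL2 T f f') (hT : 0 ≤ T) :
    ∫ t in (0:ℝ)..T, |f' t| ≤ T + 2 := by
  obtain ⟨n, hn⟩ := exists_nat_ge (T / 2)
  induction n generalizing T f f' with
  | zero =>
    simp only [Nat.cast_zero] at hn
    linarith [h.integral_abs_deriv_le_two hT (by linarith)]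
  | succ n ih =>
    rcases le_or_gt T 2 with hT₂ | hT₂
    · linarith [h.integral_abs_deriv_le_two hT hT₂]
    obtain ⟨S, rfl⟩ : ∃ S, T = S + 2 := ⟨T - 2, by ring⟩
    have hS : 0 ≤ S := by linarith
    rw [h.integral_abs_deriv_add hS zero_le_two]
    have hfirst := ih (h.mono (by linarith)) hS (by push_cast at hn; linarith)
    have hsecond := (h.comp_add_right hS le_rfl).integral_abs_deriv_le_two zero_le_two le_rfl
    linarith

theorem integral_abs_deriv_le_sigma1 (h : InL2 T f f') (hT : 0 ≤ T) :
    ∫ t in (0:ℝ)..T, |f' t| ≤ sigma1 T :=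
  le_csSup ⟨T + 2, by rintro _ ⟨g, g', hg, rfl⟩; exact hg.integral_abs_deriv_le hT⟩
    ⟨f, f', h, rfl⟩

end InL2

theorem sigma1_le_of_forall {T c : ℝ}
    (hc : ∀ f f' : ℝ → ℝ, InL2 T f f' → ∫ t in (0:ℝ)..T, |f' t| ≤ c) : sigma1 T ≤ c := by
  have hzero : InL2 T (fun _ => 0) (fun _ => 0) :=
    ⟨fun t _ => hasDerivWithinAt_const t _ 0, fun t _ => by simp,
      (LipschitzWith.const' 0).lipschitzOnWith⟩
  exact csSup_le ⟨_, _, _, hzero, rfl⟩ fun _ ⟨f, f', hf, hy⟩ => hy ▸ hc f f' hf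

/-- `σ₁` is subadditive, and consequently `σ₁(T) ≤ T + 2` for all `T > 0`. -/
theorem sigma1_subadditive :
    (∀ T₁ T₂ : ℝ, 0 < T₁ → 0 < T₂ → sigma1 (T₁ + T₂) ≤ sigma1 T₁ + sigma1 T₂) ∧
    (∀ T : ℝ, 0 < T → sigma1 T ≤ T + 2) := by
  refine ⟨fun T₁ T₂ h₁ h₂ => sigma1_le_of_forall fun f f' hf => ?_,
    fun T hT => sigma1_le_of_forall fun f f' hf => hf.integral_abs_deriv_le hT.le⟩
  rw [hf.integral_abs_deriv_add h₁.le h₂.le]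
  exact add_le_add ((hf.mono (by linarith)).integral_abs_deriv_le_sigma1 h₁.le)
    ((hf.comp_add_right h₁.le le_rfl).integral_abs_deriv_le_sigma1 h₂.le)
end
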